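/- For all a, b ∈ V, axiom (Ax1) is validated: for any x ∈ b →̃ a and any y ∈ a →̃ x, we have y ∈ D, that is, y ∈ {T, t}. -/
import Mathlib


inductive MV | T | t | f | F
deriving DecidableEq

open MV

def D : Set MV := {T, t}

def mneg : MV → MV
  | T => F | t => f | f => t | F => T

def mimp : MV → MV → Set MV
  | T, b => {b}
  | t, T => {T} | t, t => {T, t} | t, f => {f} | t, F => {f}
  | f, T => {T} | f, t => {T, t} | f, f => {T, t} | f, F => {t}
  | F, _ => {T}

def box1 : MV → Set MV
  | T => {T, t} | _ => {f, F}

def box2 : MV → Set MV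
  | T => {T} | _ => {f, F}

def box3 : MV → Set MV
  | T => {T} | _ => {F}

theorem ax1_valid :
    ∀ a b x y : MV, x ∈ mimp b a → y ∈ mimp a x → y ∈ D := by
  intro a b x y hx hy
  cases a <;> cases b <;> simp_all [mimp, D] <;> rcases hx with rfl|rfl <;> simp_all [mimp]
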